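/- arXiv:1308.0041 — 5 statements merged into one kernel-verified Lean document; each statement's English description precedes it below -/
import Mathlib

section
/- Let P be a nonnegative real random variable and J a random variable with the Gamma distribution with shape k > 0 and scale θ > 0, with P and J independent, and let β > 0. Then ∑_{m=0}^{⌊k⌋−1} (1/m!)·E[(P/(θβ))^m · e^{−P/(θβ)}] ≤ ℙ(P ≤ β·J) ≤ ∑_{m=0}^{⌈k⌉−1} (1/m!)·E[(P/(θβ))^m · e^{−P/(θβ)}]. (Here E[P^m e^{−P/(θβ)}] is the m-th derivative of the Laplace transform s ↦ E[e^{−sP}] of P, up to sign, evaluated at s = 1/(θβ); each expectation is finite since the integrand is bounded.) -/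
open MeasureTheory ProbabilityTheory

/-- The density of the Gamma distribution with shape `k` and scale `θ`:
`x ↦ x^(k-1) * exp(-x/θ) / (Γ(k) * θ^k)` on `(0, ∞)`. -/
noncomputable def gammaDensity (k θ x : ℝ) : ℝ :=
  Set.indicator (Set.Ioi 0) (fun y => y ^ (k - 1) * Real.exp (-y / θ) / (Real.Gamma k * θ ^ k)) x

/-- `J` has the Gamma distribution with shape `k` and scale `θ` under `μ`. -/
def IsGammaLaw {Ω : Type*} [MeasurableSpace Ω] (μ : Measure Ω) (J : Ω → ℝ) (k θ : ℝ) : Prop :=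
  Measure.map J μ = volume.withDensity (fun x => ENNReal.ofReal (gammaDensity k θ x))

open scoped ENNReal Nat
open Real Set Filter Topology

/-! For an integer shape `n`, the Gamma tail is the Erlang tail
`ℙ(Γ(n, r) ≥ x) = e^{-rx} ∑_{m<n} (rx)^m / m!` (its derivative in `x` is minus the density).
The Gamma densities of shapes `a < b` cross exactly once, their ratio being a multiple of
`t^(b-a)`, so the Gamma tail is monotone in the shape and is sandwiched between the Erlang tails of
shapes `⌊k⌋` and `⌈k⌉`. Conditioning on `P`, which is independent of `J`, turns
`ℙ(P ≤ βJ)` into `E[ℙ(Γ(k, 1/θ) ≥ P/β)]`, and integrating the two Erlang bounds gives the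
claimed sums. -/

noncomputable def erlangTail (n : ℕ) (y : ℝ) : ℝ :=
  exp (-y) * ∑ m ∈ Finset.range n, y ^ m / m !

lemma erlangTail_zero (y : ℝ) : erlangTail 0 y = 0 := by
  simp [erlangTail]

lemma erlangTail_nonneg (n : ℕ) {y : ℝ} (hy : 0 ≤ y) : 0 ≤ erlangTail n y := by
  unfold erlangTail
  positivity

lemma erlangTail_le_one (n : ℕ) {y : ℝ} (hy : 0 ≤ y) : erlangTail n y ≤ 1 :=
  calc erlangTail n y ≤ exp (-y) * exp y :=
        mul_le_mul_of_nonneg_left (sum_le_exp_of_nonneg hy n) (exp_pos _).le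
    _ = 1 := by rw [← exp_add, neg_add_cancel, exp_zero]

@[fun_prop]
lemma continuous_erlangTail (n : ℕ) : Continuous (erlangTail n) := by
  unfold erlangTail
  fun_prop

lemma hasDerivAt_erlangTail_succ (n : ℕ) (y : ℝ) :
    HasDerivAt (erlangTail (n + 1)) (-(exp (-y) * (y ^ n / n !))) y := by
  induction n with
  | zero =>
    have hone : erlangTail 1 = fun y => exp (-y) := by
      funext y
      simp [erlangTail]
    simpa [hone] using (hasDerivAt_neg y).exp
  | succ n ih =>
    have hterm : HasDerivAt (fun y => exp (-y) * (y ^ (n + 1) / (n + 1) !))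
        (exp (-y) * -1 * (y ^ (n + 1) / (n + 1) !)
          + exp (-y) * ((n + 1 : ℕ) * y ^ n / (n + 1) !)) y :=
      (hasDerivAt_neg y).exp.mul ((hasDerivAt_pow (n + 1) y).div_const _)
    have hsplit : erlangTail (n + 2)
        = fun y => erlangTail (n + 1) y + exp (-y) * (y ^ (n + 1) / (n + 1) !) := by
      funext y
      simp only [erlangTail, Finset.sum_range_succ _ (n + 1), mul_add]
    rw [hsplit]
    refine (ih.add hterm).congr_deriv ?_
    rw [Nat.factorial_succ]
    push_cast
    field_simp
    ring

lemma tendsto_erlangTail_atTop (n : ℕ) : Tendsto (erlangTail n) atTop (𝓝 0) := by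
  have h := tendsto_finsetSum (Finset.range n) fun m _ =>
    (tendsto_pow_mul_exp_neg_atTop_nhds_zero m).div_const (m ! : ℝ)
  simp only [zero_div, Finset.sum_const_zero] at h
  refine h.congr fun y => ?_
  simp only [erlangTail, Finset.mul_sum]
  exact Finset.sum_congr rfl fun m _ => by ring

lemma gammaPDFReal_natCast_add_one (n : ℕ) (r : ℝ) {t : ℝ} (ht : 0 ≤ t) :
    gammaPDFReal (n + 1) r t = r * (exp (-(r * t)) * ((r * t) ^ n / n !)) := by
  have hcast : (n : ℝ) + 1 = ((n + 1 : ℕ) : ℝ) := by push_cast; ring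
  rw [gammaPDFReal, if_pos ht, add_sub_cancel_right, rpow_natCast, Gamma_nat_eq_factorial, hcast,
    rpow_natCast, mul_pow]
  ring

lemma gammaMeasure_Ici_natCast_add_one (n : ℕ) {r x : ℝ} (hr : 0 < r) (hx : 0 ≤ x) :
    gammaMeasure (n + 1) r (Ici x) = ENNReal.ofReal (erlangTail (n + 1) (r * x)) := by
  set F : ℝ → ℝ := fun t => -erlangTail (n + 1) (r * t)
  have hderiv : ∀ t ∈ Ioi x, HasDerivAt F (gammaPDFReal (n + 1) r t) t := by
    intro t ht
    rw [gammaPDFReal_natCast_add_one n r (hx.trans ht.out.le)]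
    exact ((hasDerivAt_erlangTail_succ n (r * t)).comp t
      ((hasDerivAt_id t).const_mul r)).neg.congr_deriv (by ring)
  have hcont : ContinuousWithinAt F (Ici x) x := (by fun_prop : Continuous F).continuousWithinAt
  have hnonneg : ∀ t ∈ Ioi x, 0 ≤ gammaPDFReal (n + 1) r t :=
    fun t _ => gammaPDFReal_nonneg (by positivity) hr t
  have hlim : Tendsto F atTop (𝓝 0) := by
    simpa using ((tendsto_erlangTail_atTop (n + 1)).comp (tendsto_id.const_mul_atTop hr)).neg
  have hint := integrableOn_Ioi_deriv_of_nonneg hcont hderiv hnonneg hlim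
  rw [gammaMeasure, withDensity_apply _ measurableSet_Ici, ← setLIntegral_congr Ioi_ae_eq_Ici]
  unfold gammaPDF
  rw [← ofReal_integral_eq_lintegral_ofReal hint
      (ae_of_all _ fun t => gammaPDFReal_nonneg (by positivity) hr t),
    integral_Ioi_of_hasDerivAt_of_nonneg hcont hderiv hnonneg hlim]
  simp [F]

lemma setLIntegral_Ici_le_of_single_crossing {ν : Measure ℝ} {f g : ℝ → ℝ≥0∞}
    (hfg : ∫⁻ t, f t ∂ν = ∫⁻ t, g t ∂ν) (hg : ∫⁻ t, g t ∂ν ≠ ∞) {t₀ : ℝ}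
    (hlt : ∀ᵐ t ∂ν, t < t₀ → g t ≤ f t) (hge : ∀ᵐ t ∂ν, t₀ ≤ t → f t ≤ g t) (x : ℝ) :
    ∫⁻ t in Ici x, f t ∂ν ≤ ∫⁻ t in Ici x, g t ∂ν := by
  rcases le_or_gt t₀ x with hx | hx
  · exact setLIntegral_mono_ae' measurableSet_Ici (hge.mono fun t ht hxt => ht (hx.trans hxt))
  have hsplit (h : ℝ → ℝ≥0∞) : ∫⁻ t in Ici x, h t ∂ν + ∫⁻ t in Iio x, h t ∂ν = ∫⁻ t, h t ∂ν := by
    rw [← compl_Ici]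
    exact lintegral_add_compl h measurableSet_Ici
  have hbelow : ∫⁻ t in Iio x, g t ∂ν ≤ ∫⁻ t in Iio x, f t ∂ν :=
    setLIntegral_mono_ae' measurableSet_Iio (hlt.mono fun t ht htx => ht (htx.out.trans hx))
  have hgIio : ∫⁻ t in Iio x, g t ∂ν ≠ ∞ :=
    ne_top_of_le_ne_top hg (setLIntegral_le_lintegral (Iio x) g)
  refine (ENNReal.add_le_add_iff_right hgIio).mp ?_
  calc ∫⁻ t in Ici x, f t ∂ν + ∫⁻ t in Iio x, g t ∂ν
      ≤ ∫⁻ t in Ici x, f t ∂ν + ∫⁻ t in Iio x, f t ∂ν := add_le_add_right hbelow _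
    _ = ∫⁻ t in Ici x, g t ∂ν + ∫⁻ t in Iio x, g t ∂ν := by rw [hsplit, hsplit, hfg]

lemma gammaPDFReal_eq_mul_rpow_sub {a b r t : ℝ} (ha : 0 < a) (hr : 0 < r) (ht : 0 < t) :
    gammaPDFReal b r t = r ^ (b - a) * Gamma a / Gamma b * t ^ (b - a) * gammaPDFReal a r t := by
  have hGa := (Gamma_pos_of_pos ha).ne'
  rw [gammaPDFReal, gammaPDFReal, if_pos ht.le, if_pos ht.le,
    show b = (b - a) + a by ring, rpow_add hr, show b - a + a - 1 = (b - a) + (a - 1) by ring,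
    rpow_add ht]
  simp only [add_sub_cancel_right]
  field_simp

lemma gammaMeasure_Ici_mono_shape {a b r : ℝ} (ha : 0 < a) (hab : a ≤ b) (hr : 0 < r) (x : ℝ) :
    gammaMeasure a r (Ici x) ≤ gammaMeasure b r (Ici x) := by
  obtain rfl | hab := hab.eq_or_lt
  · exact le_rfl
  have hb : 0 < b := ha.trans hab
  have hba : 0 < b - a := sub_pos.2 hab
  set C := r ^ (b - a) * Gamma a / Gamma b
  have hC : 0 < C := by
    have := Gamma_pos_of_pos ha
    have := Gamma_pos_of_pos hb
    positivity
  -- the densities cross where `C * t ^ (b - a) = 1`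
  set t₀ := C⁻¹ ^ (b - a)⁻¹
  have ht₀ : 0 < t₀ := rpow_pos_of_pos (inv_pos.2 hC) _
  have hratio {t : ℝ} (ht : 0 < t) := gammaPDFReal_eq_mul_rpow_sub (b := b) ha hr ht
  rw [gammaMeasure, gammaMeasure, withDensity_apply _ measurableSet_Ici,
    withDensity_apply _ measurableSet_Ici]
  refine setLIntegral_Ici_le_of_single_crossing (t₀ := t₀)
    (by rw [lintegral_gammaPDF_eq_one ha hr, lintegral_gammaPDF_eq_one hb hr])
    (by simp [lintegral_gammaPDF_eq_one hb hr]) ?_ ?_ x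
  · filter_upwards [Measure.ae_ne volume 0] with t ht0 htt₀
    rcases ht0.lt_or_gt with ht | ht
    · simp [gammaPDF_of_neg ht]
    refine ENNReal.ofReal_le_ofReal ?_
    rw [hratio ht]
    refine mul_le_of_le_one_left (gammaPDFReal_nonneg ha hr t) ?_
    rw [← le_inv_mul_iff₀ hC, mul_one, ← le_rpow_inv_iff_of_pos ht.le (inv_pos.2 hC).le hba]
    exact htt₀.le
  · refine ae_of_all _ fun t htt₀ => ENNReal.ofReal_le_ofReal ?_
    have ht : 0 < t := ht₀.trans_le htt₀
    rw [hratio ht]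
    refine le_mul_of_one_le_left (gammaPDFReal_nonneg ha hr t) ?_
    rw [← inv_mul_le_iff₀ hC, mul_one, ← rpow_inv_le_iff_of_pos (inv_pos.2 hC).le ht.le hba]
    exact htt₀

lemma ofReal_erlangTail_le_gammaMeasure_Ici {a r x : ℝ} {n : ℕ} (hr : 0 < r) (hx : 0 ≤ x)
    (hn : (n : ℝ) ≤ a) : ENNReal.ofReal (erlangTail n (r * x)) ≤ gammaMeasure a r (Ici x) := by
  cases n with
  | zero => simp [erlangTail_zero]
  | succ n =>
    push_cast at hn
    rw [← gammaMeasure_Ici_natCast_add_one n hr hx]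
    exact gammaMeasure_Ici_mono_shape (by positivity) hn hr x

lemma gammaMeasure_Ici_le_ofReal_erlangTail {a r x : ℝ} {n : ℕ} (ha : 0 < a) (hr : 0 < r)
    (hx : 0 ≤ x) (hn : a ≤ n) :
    gammaMeasure a r (Ici x) ≤ ENNReal.ofReal (erlangTail n (r * x)) := by
  obtain ⟨n, rfl⟩ := Nat.exists_eq_succ_of_ne_zero (n := n) (by rintro rfl; simp at hn; linarith)
  push_cast at hn
  rw [← gammaMeasure_Ici_natCast_add_one n hr hx]
  exact gammaMeasure_Ici_mono_shape ha hn hr x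

lemma gammaDensity_eq_gammaPDFReal {k θ x : ℝ} (hθ : 0 ≤ θ) (hx : x ≠ 0) :
    gammaDensity k θ x = gammaPDFReal k θ⁻¹ x := by
  rcases hx.lt_or_gt with hx | hx
  · simp [gammaDensity, gammaPDFReal, hx.not_gt, hx.not_ge]
  · rw [gammaDensity, indicator_of_mem (mem_Ioi.2 hx), gammaPDFReal, if_pos hx.le, inv_rpow hθ,
      show -x / θ = -(θ⁻¹ * x) by ring]
    ring

lemma IsGammaLaw.map_eq_gammaMeasure {Ω : Type*} [MeasurableSpace Ω] {μ : Measure Ω} {J : Ω → ℝ}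
    {k θ : ℝ} (hJ : IsGammaLaw μ J k θ) (hθ : 0 ≤ θ) : μ.map J = gammaMeasure k θ⁻¹ := by
  rw [hJ, gammaMeasure]
  refine withDensity_congr_ae ?_
  filter_upwards [Measure.ae_ne volume 0] with x hx
  rw [gammaDensity_eq_gammaPDFReal hθ hx, gammaPDF]

lemma ProbabilityTheory.IndepFun.measure_prodMk_mem_eq_lintegral {Ω α γ : Type*}
    [MeasurableSpace Ω] [MeasurableSpace α] [MeasurableSpace γ] {μ : Measure Ω} [IsFiniteMeasure μ]
    {X : Ω → α} {Y : Ω → γ} (hXY : IndepFun X Y μ) (hX : Measurable X) (hY : Measurable Y)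
    {s : Set (α × γ)} (hs : MeasurableSet s) :
    μ {ω | (X ω, Y ω) ∈ s} = ∫⁻ ω, μ.map Y (Prod.mk (X ω) ⁻¹' s) ∂μ := by
  change μ ((fun ω => (X ω, Y ω)) ⁻¹' s) = _
  rw [← Measure.map_apply (hX.prodMk hY) hs,
    (indepFun_iff_map_prod_eq_prod_map_map hX.aemeasurable hY.aemeasurable).mp hXY,
    Measure.prod_apply hs, lintegral_map (measurable_measure_prodMk_left hs) hX]

section Expectation

variable {Ω : Type*} [MeasurableSpace Ω] {μ : Measure Ω} [IsFiniteMeasure μ] {Y : Ω → ℝ}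

lemma integrable_erlangTail_comp (hY : AEMeasurable Y μ) (hY₀ : ∀ᵐ ω ∂μ, 0 ≤ Y ω) (n : ℕ) :
    Integrable (fun ω => erlangTail n (Y ω)) μ := by
  have hmeas := (continuous_erlangTail n).measurable.comp_aemeasurable hY
  refine Integrable.of_bound hmeas.aestronglyMeasurable 1 ?_
  filter_upwards [hY₀] with ω hω
  rw [Real.norm_of_nonneg (erlangTail_nonneg n hω)]
  exact erlangTail_le_one n hω

lemma integral_erlangTail_comp (hY : AEMeasurable Y μ) (hY₀ : ∀ᵐ ω ∂μ, 0 ≤ Y ω) (n : ℕ) :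
    ∫ ω, erlangTail n (Y ω) ∂μ
      = ∑ m ∈ Finset.range n, (1 / m ! : ℝ) * ∫ ω, Y ω ^ m * exp (-Y ω) ∂μ := by
  have hint (m : ℕ) : Integrable (fun ω => exp (-Y ω) * (Y ω ^ m / m !)) μ := by
    refine Integrable.of_bound (by fun_prop) 1 ?_
    filter_upwards [hY₀] with ω hω
    rw [Real.norm_of_nonneg (by positivity)]
    calc exp (-Y ω) * (Y ω ^ m / m !) ≤ exp (-Y ω) * exp (Y ω) :=
          mul_le_mul_of_nonneg_left (pow_div_factorial_le_exp _ hω m) (exp_pos _).le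
      _ = 1 := by rw [← exp_add, neg_add_cancel, exp_zero]
  simp only [erlangTail, Finset.mul_sum]
  rw [integral_finsetSum _ fun m _ => hint m]
  refine Finset.sum_congr rfl fun m _ => ?_
  rw [← integral_const_mul]
  congr 1 with ω
  ring

end Expectation

theorem stmt_0 {Ω : Type*} [MeasurableSpace Ω] (μ : Measure Ω) [IsProbabilityMeasure μ]
    (P J : Ω → ℝ) (hPm : Measurable P) (hJm : Measurable J)
    (hPnn : ∀ ω, 0 ≤ P ω)
    (k θ β : ℝ) (hk : 0 < k) (hθ : 0 < θ) (hβ : 0 < β)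
    (hJ : IsGammaLaw μ J k θ)
    (hindep : IndepFun P J μ) :
    (∑ m ∈ Finset.range ⌊k⌋₊,
        (1 / (Nat.factorial m) : ℝ) *
          ∫ ω, (P ω / (θ * β)) ^ m * Real.exp (-(P ω / (θ * β))) ∂μ)
      ≤ (μ {ω | P ω ≤ β * J ω}).toReal ∧
    (μ {ω | P ω ≤ β * J ω}).toReal ≤
      ∑ m ∈ Finset.range ⌈k⌉₊,
        (1 / (Nat.factorial m) : ℝ) *
          ∫ ω, (P ω / (θ * β)) ^ m * Real.exp (-(P ω / (θ * β))) ∂μ := by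
  have hPβ (ω : Ω) : 0 ≤ P ω / β := div_nonneg (hPnn ω) hβ.le
  have hY₀ (ω : Ω) : 0 ≤ P ω / (θ * β) := div_nonneg (hPnn ω) (mul_pos hθ hβ).le
  have hrate (ω : Ω) : θ⁻¹ * (P ω / β) = P ω / (θ * β) := by field_simp
  have hE : μ {ω | P ω ≤ β * J ω} = ∫⁻ ω, gammaMeasure k θ⁻¹ (Ici (P ω / β)) ∂μ := by
    have hs : MeasurableSet {q : ℝ × ℝ | q.1 ≤ β * q.2} :=
      measurableSet_le measurable_fst (measurable_snd.const_mul β)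
    rw [← hJ.map_eq_gammaMeasure hθ.le]
    refine (hindep.measure_prodMk_mem_eq_lintegral hPm hJm hs).trans (lintegral_congr fun ω => ?_)
    congr 1 with t
    simp [div_le_iff₀ hβ, mul_comm]
  have hsum (n : ℕ) := (integral_erlangTail_comp (μ := μ) (hPm.div_const (θ * β)).aemeasurable
    (ae_of_all _ hY₀) n).symm
  have hlint (n : ℕ) : ∫⁻ ω, ENNReal.ofReal (erlangTail n (P ω / (θ * β))) ∂μ
      = ENNReal.ofReal (∫ ω, erlangTail n (P ω / (θ * β)) ∂μ) :=
    (ofReal_integral_eq_lintegral_ofReal (integrable_erlangTail_comp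
      (hPm.div_const (θ * β)).aemeasurable (ae_of_all _ hY₀) n)
      (ae_of_all _ fun ω => erlangTail_nonneg n (hY₀ ω))).symm
  constructor
  · rw [hsum, ← ENNReal.ofReal_le_iff_le_toReal (measure_ne_top _ _), ← hlint, hE]
    refine lintegral_mono fun ω => ?_
    rw [← hrate]
    exact ofReal_erlangTail_le_gammaMeasure_Ici (inv_pos.2 hθ) (hPβ ω) (Nat.floor_le hk.le)
  · rw [hsum]
    refine ENNReal.toReal_le_of_le_ofReal
      (integral_nonneg fun ω => erlangTail_nonneg _ (hY₀ ω)) ?_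
    rw [← hlint, hE]
    refine lintegral_mono fun ω => ?_
    rw [← hrate]
    exact gammaMeasure_Ici_le_ofReal_erlangTail hk (inv_pos.2 hθ) (hPβ ω)
      (Nat.le_ceil k)
end

section
/- For all real numbers 0 < a ≤ b and every x ≥ 0, the regularized upper incomplete gamma function is monotone in the shape parameter: Γ(a, x)/Γ(a) ≤ Γ(b, x)/Γ(b). -/
open MeasureTheory

/-- Upper incomplete gamma function `Γ(a, x) = ∫_x^∞ t^(a-1) e^(-t) dt`. -/
noncomputable def uGamma (a x : ℝ) : ℝ := ∫ t in Set.Ioi x, t ^ (a - 1) * Real.exp (-t)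

private lemma intOn {c : ℝ} (hc : 0 < c) :
    IntegrableOn (fun t : ℝ => t ^ (c - 1) * Real.exp (-t)) (Set.Ioi 0) :=
  (Real.GammaIntegral_convergent hc).congr_fun (fun t _ => mul_comm _ _) measurableSet_Ioi

theorem stmt_2 (a b x : ℝ) (ha : 0 < a) (hab : a ≤ b) (hx : 0 ≤ x) :
    uGamma a x / Real.Gamma a ≤ uGamma b x / Real.Gamma b := by
  have hb : 0 < b := lt_of_lt_of_le ha hab
  set f : ℝ → ℝ → ℝ := fun c t => t ^ (c - 1) * Real.exp (-t) with hf
  have hIa : IntegrableOn (f a) (Set.Ioi 0) := intOn ha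
  have hIb : IntegrableOn (f b) (Set.Ioi 0) := intOn hb
  have hIax : IntegrableOn (f a) (Set.Ioi x) := hIa.mono_set (Set.Ioi_subset_Ioi hx)
  have hIbx : IntegrableOn (f b) (Set.Ioi x) := hIb.mono_set (Set.Ioi_subset_Ioi hx)
  have hIaL : IntegrableOn (f a) (Set.Ioc 0 x) := hIa.mono_set Set.Ioc_subset_Ioi_self
  have hIbL : IntegrableOn (f b) (Set.Ioc 0 x) := hIb.mono_set Set.Ioc_subset_Ioi_self
  set La := ∫ t in Set.Ioc 0 x, f a t with hLa
  set Lb := ∫ t in Set.Ioc 0 x, f b t with hLb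
  have hGamma : ∀ c : ℝ, 0 < c → Real.Gamma c =
      (∫ t in Set.Ioc 0 x, f c t) + ∫ t in Set.Ioi x, f c t := by
    intro c hc
    have h1 : Real.Gamma c = ∫ t in Set.Ioi (0:ℝ), f c t := by
      rw [Real.Gamma_eq_integral hc]
      exact setIntegral_congr_fun measurableSet_Ioi (fun t _ => mul_comm _ _)
    rw [h1, ← Set.Ioc_union_Ioi_eq_Ioi hx,
      setIntegral_union (Set.Ioc_disjoint_Ioi le_rfl) measurableSet_Ioi
        ((intOn hc).mono_set Set.Ioc_subset_Ioi_self)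
        ((intOn hc).mono_set (Set.Ioi_subset_Ioi hx))]
  have hGa : Real.Gamma a = La + uGamma a x := hGamma a ha
  have hGb : Real.Gamma b = Lb + uGamma b x := hGamma b hb
  have hGap : 0 < Real.Gamma a := Real.Gamma_pos_of_pos ha
  have hGbp : 0 < Real.Gamma b := Real.Gamma_pos_of_pos hb
  -- key inequality
  have key : uGamma a x * Lb ≤ uGamma b x * La := by
    have h1 : uGamma a x * Lb = ∫ t in Set.Ioi x, f a t * Lb := by
      rw [integral_mul_const]; rfl
    have h2 : uGamma b x * La = ∫ t in Set.Ioi x, f b t * La := by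
      rw [integral_mul_const]; rfl
    rw [h1, h2]
    refine setIntegral_mono_on (hIax.mul_const Lb) (hIbx.mul_const La)
      measurableSet_Ioi (fun t ht => ?_)
    simp only [Set.mem_Ioi] at ht
    have htpos : 0 < t := lt_of_le_of_lt hx ht
    have h3 : f a t * Lb = ∫ s in Set.Ioc 0 x, f a t * f b s := by
      rw [integral_const_mul]
    have h4 : f b t * La = ∫ s in Set.Ioc 0 x, f b t * f a s := by
      rw [integral_const_mul]
    rw [h3, h4]
    refine setIntegral_mono_on (hIbL.const_mul _) (hIaL.const_mul _)
      measurableSet_Ioc (fun s hs => ?_)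
    obtain ⟨hs0, hsx⟩ := hs
    have hst : s ≤ t := le_of_lt (lt_of_le_of_lt hsx ht)
    -- reduce to powers
    have hkey : t ^ (a - 1) * s ^ (b - 1) ≤ t ^ (b - 1) * s ^ (a - 1) := by
      have e1 : s ^ (b - 1) = s ^ (a - 1) * s ^ (b - a) := by
        rw [← Real.rpow_add hs0]; ring_nf
      have e2 : t ^ (b - 1) = t ^ (a - 1) * t ^ (b - a) := by
        rw [← Real.rpow_add htpos]; ring_nf
      have hle : s ^ (b - a) ≤ t ^ (b - a) :=
        Real.rpow_le_rpow hs0.le hst (sub_nonneg.mpr hab)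
      have p1 : 0 ≤ t ^ (a - 1) := Real.rpow_nonneg htpos.le _
      have p2 : 0 ≤ s ^ (a - 1) := Real.rpow_nonneg hs0.le _
      rw [e1, e2]
      have := mul_le_mul_of_nonneg_left hle (mul_nonneg p1 p2)
      nlinarith [this]
    have hexp : 0 < Real.exp (-t) * Real.exp (-s) := by positivity
    simp only [hf]
    nlinarith [Real.exp_pos (-t), Real.exp_pos (-s),
      Real.rpow_nonneg htpos.le (a-1), Real.rpow_nonneg hs0.le (a-1),
      Real.rpow_nonneg htpos.le (b-1), Real.rpow_nonneg hs0.le (b-1)]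
  rw [div_le_div_iff₀ hGap hGbp, hGa, hGb]
  nlinarith [key]
end

section
/- Let P be a nonnegative real random variable and J a random variable with the Gamma distribution with integer shape n ≥ 1 and scale θ > 0, with P and J independent, and let β > 0. Then ℙ(P ≤ β·J) = ∑_{m=0}^{n−1} (1/m!)·E[(P/(θβ))^m · e^{−P/(θβ)}] exactly. -/
open MeasureTheory ProbabilityTheory

/-
For integer shape `k + 1` the Gamma tail has the closed form
`ℙ(J ≥ a) = e^{-a/θ} ∑_{m ≤ k} (a/θ)^m / m!` (the Erlang survival function): differentiating the
right-hand side telescopes to minus the Gamma density. By independence, `ℙ(P ≤ β J)` is the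
integral of `ℙ(J ≥ p/β)` against the law of `P`, and expanding the finite sum gives the formula.
-/

open Real Set Filter Topology Finset
open scoped Nat

noncomputable def erlangSurvival (n : ℕ) (x : ℝ) : ℝ :=
  ∑ m ∈ range n, x ^ m * exp (-x) / m !

@[fun_prop]
lemma continuous_erlangSurvival (n : ℕ) : Continuous (erlangSurvival n) := by
  unfold erlangSurvival
  fun_prop

lemma erlangSurvival_succ (n : ℕ) (x : ℝ) :
    erlangSurvival (n + 1) x = erlangSurvival n x + x ^ n * exp (-x) / n ! :=
  sum_range_succ _ _

lemma hasDerivAt_erlangSurvival_succ (n : ℕ) (x : ℝ) :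
    HasDerivAt (erlangSurvival (n + 1)) (-(x ^ n * exp (-x) / n !)) x := by
  induction n with
  | zero =>
    have h : erlangSurvival 1 = fun y => exp (-y) := funext fun y => by simp [erlangSurvival]
    simpa [h] using (hasDerivAt_neg x).exp
  | succ n ih =>
    have hterm : HasDerivAt (fun y => y ^ (n + 1) * exp (-y) / (n + 1)!)
        ((((n + 1 : ℕ) : ℝ) * x ^ n * exp (-x) - x ^ (n + 1) * exp (-x)) / (n + 1)!) x := by
      refine (((hasDerivAt_pow (n + 1) x).mul (hasDerivAt_neg x).exp).div_const _).congr_deriv ?_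
      push_cast; ring
    rw [show erlangSurvival (n + 2) = _ from funext (erlangSurvival_succ (n + 1))]
    refine (ih.add hterm).congr_deriv ?_
    rw [Nat.factorial_succ, Nat.cast_mul]
    field_simp
    ring

lemma tendsto_erlangSurvival_atTop (n : ℕ) : Tendsto (erlangSurvival n) atTop (𝓝 0) := by
  have h := tendsto_finsetSum (range n) fun m _ =>
    (tendsto_pow_mul_exp_neg_atTop_nhds_zero m).div_const (m ! : ℝ)
  simp only [zero_div, sum_const_zero] at h
  exact h

lemma erlangSurvival_nonneg (n : ℕ) {x : ℝ} (hx : 0 ≤ x) : 0 ≤ erlangSurvival n x :=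
  sum_nonneg fun m _ => by positivity

lemma pow_mul_exp_neg_div_factorial_le_one (m : ℕ) {x : ℝ} (hx : 0 ≤ x) :
    x ^ m * exp (-x) / m ! ≤ 1 := by
  rw [mul_div_right_comm, exp_neg, ← div_eq_mul_inv, div_le_one (exp_pos x)]
  exact pow_div_factorial_le_exp _ hx m

lemma gammaDensity_natCast_succ (k : ℕ) {θ x : ℝ} (hθ : 0 < θ) (hx : 0 < x) :
    gammaDensity ((k + 1 : ℕ) : ℝ) θ x = (x / θ) ^ k * exp (-(x / θ)) / k ! / θ := by
  rw [gammaDensity, indicator_of_mem (Set.mem_Ioi.mpr hx), rpow_natCast θ, Nat.cast_succ,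
    Real.Gamma_nat_eq_factorial, add_sub_cancel_right, rpow_natCast, div_pow, neg_div]
  field_simp
  ring

lemma lintegral_Ioi_gammaDensity_natCast_succ (k : ℕ) {θ a : ℝ} (hθ : 0 < θ) (ha : 0 ≤ a) :
    ∫⁻ x in Ioi a, ENNReal.ofReal (gammaDensity ((k + 1 : ℕ) : ℝ) θ x)
      = ENNReal.ofReal (erlangSurvival (k + 1) (a / θ)) := by
  set f : ℝ → ℝ := fun x => (x / θ) ^ k * exp (-(x / θ)) / k ! / θ
  have hf_nonneg : ∀ x ∈ Ioi a, 0 ≤ f x := fun x hx => by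
    have : 0 ≤ x := ha.trans hx.le
    positivity
  have hderiv : ∀ x ∈ Ici a, HasDerivAt (fun x => -erlangSurvival (k + 1) (x / θ)) (f x) x :=
    fun x _ => by
      have h := ((hasDerivAt_erlangSurvival_succ k (x / θ)).comp x
        ((hasDerivAt_id' x).div_const θ)).neg
      refine h.congr_deriv ?_
      simp only [f]
      ring
  have hlim : Tendsto (fun x => -erlangSurvival (k + 1) (x / θ)) atTop (𝓝 0) := by
    simpa using ((tendsto_erlangSurvival_atTop (k + 1)).comp
      (tendsto_id.atTop_div_const hθ)).neg
  rw [setLIntegral_congr_fun measurableSet_Ioi fun x hx =>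
      congrArg ENNReal.ofReal (gammaDensity_natCast_succ k hθ (ha.trans_lt hx)),
    ← ofReal_integral_eq_lintegral_ofReal (integrableOn_Ioi_deriv_of_nonneg' hderiv hf_nonneg hlim)
      ((ae_restrict_iff' measurableSet_Ioi).mpr (ae_of_all _ hf_nonneg)),
    integral_Ioi_of_hasDerivAt_of_nonneg' hderiv hf_nonneg hlim, zero_sub, neg_neg]

lemma IsGammaLaw.map_apply_Ici {Ω : Type*} [MeasurableSpace Ω] {μ : Measure Ω} {J : Ω → ℝ}
    {k : ℕ} {θ a : ℝ} (hJ : IsGammaLaw μ J ((k + 1 : ℕ) : ℝ) θ) (hθ : 0 < θ) (ha : 0 ≤ a) :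
    μ.map J (Ici a) = ENNReal.ofReal (erlangSurvival (k + 1) (a / θ)) := by
  rw [hJ, withDensity_apply _ measurableSet_Ici, ← restrict_Ioi_eq_restrict_Ici,
    lintegral_Ioi_gammaDensity_natCast_succ k hθ ha]

lemma ProbabilityTheory.IndepFun.measure_preimage_eq_lintegral {Ω α β : Type*} [MeasurableSpace Ω]
    [MeasurableSpace α] [MeasurableSpace β] {μ : Measure Ω} [IsFiniteMeasure μ]
    {X : Ω → α} {Y : Ω → β} (hX : AEMeasurable X μ) (hY : AEMeasurable Y μ)
    (hXY : IndepFun X Y μ) {s : Set (α × β)} (hs : MeasurableSet s) :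
    μ ((fun ω => (X ω, Y ω)) ⁻¹' s) = ∫⁻ x, μ.map Y (Prod.mk x ⁻¹' s) ∂μ.map X := by
  rw [← Measure.map_apply_of_aemeasurable (hX.prodMk hY) hs,
    hXY.map_prod_eq_prod_map_map hX hY, Measure.prod_apply hs]

lemma measure_le_mul_eq_lintegral_erlangSurvival {Ω : Type*} [MeasurableSpace Ω]
    {μ : Measure Ω} [IsFiniteMeasure μ] {P J : Ω → ℝ} (hPm : Measurable P) (hJm : Measurable J)
    (hPnn : ∀ ω, 0 ≤ P ω) {k : ℕ} {θ β : ℝ} (hθ : 0 < θ) (hβ : 0 < β)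
    (hJ : IsGammaLaw μ J ((k + 1 : ℕ) : ℝ) θ) (hindep : IndepFun P J μ) :
    μ {ω | P ω ≤ β * J ω}
      = ∫⁻ ω, ENNReal.ofReal (erlangSurvival (k + 1) (P ω / (θ * β))) ∂μ := by
  have hslice : ∀ p, 0 ≤ p → μ.map J (Prod.mk p ⁻¹' {q : ℝ × ℝ | q.1 ≤ β * q.2})
      = ENNReal.ofReal (erlangSurvival (k + 1) (p / (θ * β))) := fun p hp => by
    have hIci : Prod.mk p ⁻¹' {q : ℝ × ℝ | q.1 ≤ β * q.2} = Ici (p / β) := by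
      ext j; simp [div_le_iff₀ hβ, mul_comm]
    rw [hIci, hJ.map_apply_Ici hθ (by positivity), div_div, mul_comm β]
  have hP_nonneg : ∀ᵐ p ∂μ.map P, 0 ≤ p :=
    (ae_map_iff hPm.aemeasurable measurableSet_Ici).mpr (ae_of_all _ hPnn)
  rw [← lintegral_map (f := fun p => ENNReal.ofReal (erlangSurvival (k + 1) (p / (θ * β))))
      (by fun_prop) hPm, ← lintegral_congr_ae (hP_nonneg.mono hslice)]
  exact hindep.measure_preimage_eq_lintegral hPm.aemeasurable hJm.aemeasurable
    (measurableSet_le measurable_fst (measurable_snd.const_mul β))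

theorem stmt_3 {Ω : Type*} [MeasurableSpace Ω] (μ : Measure Ω) [IsProbabilityMeasure μ]
    (P J : Ω → ℝ) (hPm : Measurable P) (hJm : Measurable J)
    (hPnn : ∀ ω, 0 ≤ P ω)
    (n : ℕ) (hn : 1 ≤ n) (θ β : ℝ) (hθ : 0 < θ) (hβ : 0 < β)
    (hJ : IsGammaLaw μ J (n : ℝ) θ)
    (hindep : IndepFun P J μ) :
    (μ {ω | P ω ≤ β * J ω}).toReal
      = ∑ m ∈ Finset.range n,
          (1 / (Nat.factorial m) : ℝ) *
            ∫ ω, (P ω / (θ * β)) ^ m * Real.exp (-(P ω / (θ * β))) ∂μ := by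
  obtain ⟨k, rfl⟩ := Nat.exists_eq_add_of_le' hn
  have hx : ∀ ω, 0 ≤ P ω / (θ * β) := fun ω => div_nonneg (hPnn ω) (by positivity)
  have hterm : ∀ m, Integrable (fun ω => (P ω / (θ * β)) ^ m * exp (-(P ω / (θ * β))) / m !) μ :=
    fun m => .of_bound (by fun_prop) 1 (ae_of_all _ fun ω => by
      have := hx ω
      rw [norm_of_nonneg (by positivity)]
      exact pow_mul_exp_neg_div_factorial_le_one m this)
  rw [measure_le_mul_eq_lintegral_erlangSurvival hPm hJm hPnn hθ hβ hJ hindep,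
    ← integral_eq_lintegral_of_nonneg_ae (ae_of_all _ fun ω => erlangSurvival_nonneg _ (hx ω))
      (by fun_prop)]
  unfold erlangSurvival
  rw [integral_finsetSum _ fun m _ => hterm m]
  exact sum_congr rfl fun m _ => by rw [integral_div, one_div_mul_eq_div]
end

section
/- Fix D > 0, α > 2, T > 0, s > 0 and g > 0. Then (2/D²)·∫_0^D r · exp(−s·g·r^{−α}·1{g·r^{−α} ≥ T}) dr = 1 − (1/D²)·[ min{D^α, g/T}^{2/α}·(1 − e^{−s·g·max{D^{−α}, T/g}}) + (s·g)^{2/α}·Γ(1 − 2/α, s·g·max{D^{−α}, T/g}) ], where 1{·} denotes the indicator function. -/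
open MeasureTheory

/-! With `A = s g`, the indicator equals `1` exactly for `r ≤ c := min(D^α, g/T)^(1/α)`, so the
integral splits into `∫_0^c r e^(-A r^(-α)) dr` and `∫_c^D r dr`. The first has the primitive
`(r² e^(-A r^(-α)) - A^(2/α) Γ(1 - 2/α, A r^(-α))) / 2`, which tends to `0` as `r → 0⁺` because
`A r^(-α) → ∞` and `Γ(a, x) → 0` as `x → ∞`. -/

open Set Filter Real intervalIntegral
open scoped Topology Interval

lemma integrableOn_Ioi_rpow_mul_exp_neg {a : ℝ} (ha : 0 < a) :
    IntegrableOn (fun t : ℝ => t ^ (a - 1) * exp (-t)) (Ioi 0) :=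
  (GammaIntegral_convergent ha).congr_fun (fun _ _ => mul_comm _ _) measurableSet_Ioi

lemma uGamma_eq_uGamma_zero_sub {a x : ℝ} (ha : 0 < a) (hx : 0 ≤ x) :
    uGamma a x = uGamma a 0 - ∫ t in (0:ℝ)..x, t ^ (a - 1) * exp (-t) := by
  rw [← integral_Ioi_sub_Ioi (integrableOn_Ioi_rpow_mul_exp_neg ha) hx, uGamma, uGamma]
  ring

lemma hasDerivAt_uGamma {a x : ℝ} (ha : 0 < a) (hx : 0 < x) :
    HasDerivAt (uGamma a) (-(x ^ (a - 1) * exp (-x))) x := by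
  have hint : IntervalIntegrable (fun t : ℝ => t ^ (a - 1) * exp (-t)) volume 0 x :=
    (intervalIntegrable_iff_integrableOn_Ioc_of_le hx.le).2
      ((integrableOn_Ioi_rpow_mul_exp_neg ha).mono_set Ioc_subset_Ioi_self)
  have hcont : ContinuousAt (fun t : ℝ => t ^ (a - 1) * exp (-t)) x :=
    (continuousAt_rpow_const x (a - 1) (Or.inl hx.ne')).mul (by fun_prop)
  have hmeas : Measurable fun t : ℝ => t ^ (a - 1) * exp (-t) := by fun_prop
  refine ((integral_hasDerivAt_right hint hmeas.stronglyMeasurable.stronglyMeasurableAtFilter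
    hcont).const_sub (uGamma a 0)).congr_of_eventuallyEq ?_
  filter_upwards [lt_mem_nhds hx] with y hy
  exact uGamma_eq_uGamma_zero_sub ha hy.le

lemma tendsto_uGamma_atTop {a : ℝ} (ha : 0 < a) : Tendsto (uGamma a) atTop (𝓝 0) := by
  have h := (intervalIntegral_tendsto_integral_Ioi 0 (integrableOn_Ioi_rpow_mul_exp_neg ha)
    tendsto_id).const_sub (uGamma a 0)
  rw [show uGamma a 0 - ∫ t in Ioi 0, t ^ (a - 1) * exp (-t) = 0 from sub_self _] at h
  refine h.congr' ?_
  filter_upwards [eventually_ge_atTop 0] with x hx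
  exact (uGamma_eq_uGamma_zero_sub ha hx).symm

lemma hasDerivAt_primitive_mul_exp_neg_rpow {A α r : ℝ} (hA : 0 < A) (hα : 2 < α) (hr : 0 < r) :
    HasDerivAt (fun r => (r ^ 2 * exp (-(A * r ^ (-α)))
        - A ^ (2 / α) * uGamma (1 - 2 / α) (A * r ^ (-α))) / 2)
      (r * exp (-(A * r ^ (-α)))) r := by
  have hα0 : 0 < α := by linarith
  have ha : 0 < 1 - 2 / α := by rw [sub_pos, div_lt_one hα0]; exact hα
  have hX : HasDerivAt (fun r => A * r ^ (-α)) (A * (-α * r ^ (-α - 1))) r :=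
    (hasDerivAt_rpow_const (Or.inl hr.ne')).const_mul A
  have hΓ := (hasDerivAt_uGamma ha (mul_pos hA (rpow_pos_of_pos hr _))).comp r hX
  refine ((((hasDerivAt_pow 2 r).mul hX.neg.exp).sub (hΓ.const_mul (A ^ (2 / α)))).div_const
    2).congr_deriv ?_
  have hpow : (A * r ^ (-α)) ^ (1 - 2 / α - 1) = A ^ (-(2 / α)) * r ^ 2 := by
    rw [mul_rpow hA.le (rpow_nonneg hr.le _), ← rpow_mul hr.le, ← rpow_natCast]
    congr 2 <;> field_simp <;> ring
  have hA1 : A ^ (2 / α) * A ^ (-(2 / α)) = 1 := by rw [← rpow_add hA, add_neg_cancel, rpow_zero]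
  rw [hpow, Pi.neg_apply]
  linear_combination -(r ^ 2 * exp (-(A * r ^ (-α))) * A * α * r ^ (-α - 1) / 2) * hA1

lemma tendsto_primitive_mul_exp_neg_rpow_nhdsGT_zero {A α : ℝ} (hA : 0 < A) (hα : 2 < α) :
    Tendsto (fun r => (r ^ 2 * exp (-(A * r ^ (-α)))
        - A ^ (2 / α) * uGamma (1 - 2 / α) (A * r ^ (-α))) / 2) (𝓝[>] 0) (𝓝 0) := by
  have ha : 0 < 1 - 2 / α := by rw [sub_pos, div_lt_one (by linarith)]; exact hα
  have hX : Tendsto (fun r : ℝ => A * r ^ (-α)) (𝓝[>] 0) atTop :=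
    (tendsto_rpow_neg_nhdsGT_zero (by linarith)).const_mul_atTop hA
  have hsq : Tendsto (fun r : ℝ => r ^ 2) (𝓝[>] 0) (𝓝 0) :=
    ((continuous_pow 2).tendsto' 0 0 (zero_pow two_ne_zero)).mono_left nhdsWithin_le_nhds
  have hexp := tendsto_exp_atBot.comp (tendsto_neg_atTop_atBot.comp hX)
  simpa using ((hsq.mul hexp).sub (((tendsto_uGamma_atTop ha).comp hX).const_mul
    (A ^ (2 / α)))).div_const 2

lemma intervalIntegrable_mul_exp_neg_rpow {A α c : ℝ} (hA : 0 ≤ A) (hc : 0 ≤ c) :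
    IntervalIntegrable (fun r => r * exp (-(A * r ^ (-α)))) volume 0 c := by
  refine intervalIntegrable_id.mono_fun' (by fun_prop) ?_
  rw [uIoc_of_le hc]
  filter_upwards [ae_restrict_mem measurableSet_Ioc] with r hr
  rw [norm_mul, norm_of_nonneg hr.1.le, norm_of_nonneg (exp_pos _).le]
  exact mul_le_of_le_one_right hr.1.le (exp_le_one_iff.2 (neg_nonpos.2 (mul_nonneg hA (rpow_nonneg hr.1.le _))))

theorem integral_mul_exp_neg_rpow {A α c : ℝ} (hA : 0 < A) (hα : 2 < α) (hc : 0 < c) :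
    ∫ r in (0:ℝ)..c, r * exp (-(A * r ^ (-α))) = (c ^ 2 * exp (-(A * c ^ (-α)))
      - A ^ (2 / α) * uGamma (1 - 2 / α) (A * c ^ (-α))) / 2 := by
  rw [integral_eq_sub_of_hasDerivAt_of_tendsto hc
    (fun r hr => hasDerivAt_primitive_mul_exp_neg_rpow hA hα hr.1)
    (intervalIntegrable_mul_exp_neg_rpow hA.le hc.le)
    (tendsto_primitive_mul_exp_neg_rpow_nhdsGT_zero hA hα)
    ((hasDerivAt_primitive_mul_exp_neg_rpow hA hα hc).continuousAt.tendsto.mono_left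
      nhdsWithin_le_nhds), sub_zero]

lemma integral_mul_exp_neg_rpow_mul_ite {A α c D : ℝ} (P : ℝ → Prop) [DecidablePred P]
    (hA : 0 ≤ A) (hc : 0 ≤ c) (hcD : c ≤ D) (hP : ∀ r ∈ Ioc 0 D, P r ↔ r ≤ c) :
    ∫ r in (0:ℝ)..D, r * exp (-(A * r ^ (-α) * if P r then 1 else 0)) =
      (∫ r in (0:ℝ)..c, r * exp (-(A * r ^ (-α)))) + (D ^ 2 - c ^ 2) / 2 := by
  have hnear : EqOn (fun r => r * exp (-(A * r ^ (-α) * if P r then 1 else 0)))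
      (fun r => r * exp (-(A * r ^ (-α)))) (Ι 0 c) := by
    intro r hr
    rw [uIoc_of_le hc] at hr
    simp only [if_pos ((hP r ⟨hr.1, hr.2.trans hcD⟩).2 hr.2), mul_one]
  have hfar : EqOn (fun r => r * exp (-(A * r ^ (-α) * if P r then 1 else 0))) (fun r => r)
      (Ι c D) := by
    intro r hr
    rw [uIoc_of_le hcD] at hr
    simp [if_neg (mt (hP r ⟨hc.trans_lt hr.1, hr.2⟩).1 (not_le.2 hr.1))]
  rw [← integral_add_adjacent_intervals
      ((intervalIntegrable_mul_exp_neg_rpow hA hc).congr hnear.symm)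
      (intervalIntegrable_id.congr hfar.symm),
    integral_congr_ae (ae_of_all _ fun r hr => hnear hr),
    integral_congr_ae (ae_of_all _ fun r hr => hfar hr), integral_id]

lemma le_mul_rpow_neg_iff {T g α r : ℝ} (hT : 0 < T) (hr : 0 < r) :
    T ≤ g * r ^ (-α) ↔ r ^ α ≤ g / T := by
  rw [rpow_neg hr.le, ← div_eq_mul_inv, le_div_iff₀ (rpow_pos_of_pos hr α), le_div_iff₀ hT,
    mul_comm]

lemma inv_min_of_pos {K : Type*} [Field K] [LinearOrder K] [IsStrictOrderedRing K] {a b : K}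
    (ha : 0 < a) (hb : 0 < b) : (min a b)⁻¹ = max a⁻¹ b⁻¹ := by
  rcases le_total a b with h | h
  · rw [min_eq_left h, max_eq_left (inv_anti₀ ha h)]
  · rw [min_eq_right h, max_eq_right (inv_anti₀ hb h)]

theorem stmt_6 (D α T s g : ℝ) (hD : 0 < D) (hα : 2 < α) (hT : 0 < T) (hs : 0 < s)
    (hg : 0 < g) :
    (2 / D ^ 2) *
        ∫ r in (0:ℝ)..D,
          r * Real.exp (-(s * g * r ^ (-α) * (if T ≤ g * r ^ (-α) then (1:ℝ) else 0)))
      = 1 - (1 / D ^ 2) *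
          (min (D ^ α) (g / T) ^ (2 / α) *
              (1 - Real.exp (-(s * g * max (D ^ (-α)) (T / g))))
            + (s * g) ^ (2 / α) * uGamma (1 - 2 / α) (s * g * max (D ^ (-α)) (T / g))) := by
  have hα0 : 0 < α := by linarith
  set m := min (D ^ α) (g / T)
  have hm : 0 < m := lt_min (rpow_pos_of_pos hD α) (div_pos hg hT)
  set c := m ^ α⁻¹
  have hc : 0 < c := rpow_pos_of_pos hm _
  have hcD : c ≤ D := (rpow_inv_le_iff_of_pos hm.le hD.le hα0).2 (min_le_left _ _)
  have hthreshold : ∀ r ∈ Ioc 0 D, T ≤ g * r ^ (-α) ↔ r ≤ c := fun r hr => by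
    rw [le_mul_rpow_neg_iff hT hr.1, le_rpow_inv_iff_of_pos hr.1.le hm.le hα0, le_min_iff,
      and_iff_right (rpow_le_rpow hr.1.le hr.2 hα0.le)]
  have hc2 : c ^ 2 = m ^ (2 / α) := by
    rw [← rpow_natCast, ← rpow_mul hm.le]
    ring_nf
  have hcα : c ^ (-α) = max (D ^ (-α)) (T / g) := by
    rw [← rpow_mul hm.le, inv_mul_eq_div, neg_div_self hα0.ne', rpow_neg_one,
      inv_min_of_pos (rpow_pos_of_pos hD α) (div_pos hg hT), rpow_neg hD.le, inv_div]
  rw [integral_mul_exp_neg_rpow_mul_ite _ (mul_pos hs hg).le hc.le hcD hthreshold,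
    integral_mul_exp_neg_rpow (mul_pos hs hg) hα hc, hc2, hcα]
  field_simp
  ring
end

section
/- Fix D > 0, α > 2, T > 0, λ > 0, an integer m ≥ 1 and b > 0. Let g be a nonnegative real random variable with g > 0 almost surely and E[g] < ∞. The function G(s) = 2πλ·∫_0^D r · E[ exp(s·g·r^{−α}·1{g·r^{−α} ≥ T}) ] dr is m-times differentiable on (−∞, 0), and its m-th derivative at s = −1/b equals (2/α)·λπ·b^{m − 2/α}·E[ g^{2/α}·Γ(m − 2/α, (g/b)·max{D^{−α}, T/g}) ]. -/
/-!
With the measure `r dr` on `(0, D]`, the function in question is `2πλ` times the moment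
generating function of the thresholded power `X (r, ω) = g r^(-α) 1{g r^(-α) ≥ T}` under
`(r dr) ⊗ μ`. As `X ≥ 0`, this mgf is analytic on `(-∞, 0)`, with `m`-th derivative
`E[X^m e^(sX)]`. For fixed `ω` the threshold cuts the radial integral at
`min D ((g / T)^(1/α))`, and the substitution `t = (g / b) r^(-α)` turns it into an upper
incomplete gamma function.
-/

open MeasureTheory ProbabilityTheory Set Real

lemma Iio_subset_interior_integrableExpSet {Ω : Type*} [MeasurableSpace Ω] {X : Ω → ℝ}
    {μ : Measure Ω} [IsFiniteMeasure μ] (hX : AEMeasurable X μ) (h0 : 0 ≤ᵐ[μ] X) :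
    Iio 0 ⊆ interior (integrableExpSet X μ) := by
  rw [← interior_Iic]
  refine interior_mono fun t (ht : t ≤ 0) => ?_
  refine (integrable_const 1).mono' (by fun_prop) ?_
  filter_upwards [h0] with ω hω
  rw [norm_of_nonneg (exp_nonneg _), exp_le_one_iff]
  exact mul_nonpos_of_nonpos_of_nonneg ht hω

noncomputable def radialMeasure (D : ℝ) : Measure ℝ :=
  (volume.restrict (Ioc 0 D)).withDensity fun r => ENNReal.ofReal r

instance (D : ℝ) : IsFiniteMeasure (radialMeasure D) :=
  isFiniteMeasure_withDensity_ofReal (intervalIntegral.intervalIntegrable_id.1).2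

lemma integral_radialMeasure (D : ℝ) (F : ℝ → ℝ) :
    ∫ r, F r ∂radialMeasure D = ∫ r in Ioc 0 D, r * F r := by
  rw [radialMeasure, integral_withDensity_eq_integral_toReal_smul (by fun_prop)
    (ae_of_all _ fun _ => ENNReal.ofReal_lt_top)]
  refine setIntegral_congr_fun measurableSet_Ioc fun r hr => ?_
  rw [ENNReal.toReal_ofReal hr.1.le, smul_eq_mul]

section
variable {Ω : Type*} [MeasurableSpace Ω] {μ : Measure Ω} [SFinite μ] {D t : ℝ}
  {X : ℝ × Ω → ℝ}

lemma intervalIntegral_mul_integral_exp_eq_mgf (hD : 0 ≤ D)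
    (ht : t ∈ integrableExpSet X ((radialMeasure D).prod μ)) :
    ∫ r in 0..D, r * ∫ ω, exp (t * X (r, ω)) ∂μ = mgf X ((radialMeasure D).prod μ) t := by
  rw [mgf, integral_prod _ ht, integral_radialMeasure, intervalIntegral.integral_of_le hD]

lemma iteratedDeriv_mgf_radialMeasure_prod
    (ht : t ∈ interior (integrableExpSet X ((radialMeasure D).prod μ))) (n : ℕ) :
    iteratedDeriv n (mgf X ((radialMeasure D).prod μ)) t =
      ∫ ω, (∫ r in Ioc 0 D, r * (X (r, ω) ^ n * exp (t * X (r, ω)))) ∂μ := by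
  rw [iteratedDeriv_mgf ht, integral_prod_symm _
    (integrable_pow_mul_exp_of_mem_interior_integrableExpSet ht n)]
  simp only [integral_radialMeasure]
end

lemma uGamma_mul_rpow_neg {a α c R : ℝ} (hα : 0 < α) (hc : 0 < c) (hR : 0 < R) :
    uGamma a (c * R ^ (-α)) =
      α * c ^ a * ∫ r in Ioc 0 R, r ^ (-α * a - 1) * exp (-(c * r ^ (-α))) := by
  set x₀ := c * R ^ (-α)
  set f := (Ioi x₀).indicator fun t => t ^ (a - 1) * exp (-t) with f_def
  have hf : ∀ r ∈ Ioi (0 : ℝ), (|-α| * r ^ (-α - 1)) • f (c * r ^ (-α)) =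
      (Ioo 0 R).indicator (fun r => α * c ^ (a - 1) *
        (r ^ (-α * a - 1) * exp (-(c * r ^ (-α))))) r := by
    intro r (hr : 0 < r)
    by_cases hrR : r < R
    · have hmem : c * r ^ (-α) ∈ Ioi x₀ :=
        mul_lt_mul_of_pos_left ((rpow_lt_rpow_iff_of_neg hR hr (neg_neg_of_pos hα)).2 hrR) hc
      rw [f_def, indicator_of_mem hmem, indicator_of_mem (show r ∈ Ioo 0 R from ⟨hr, hrR⟩),
        abs_neg, abs_of_pos hα, smul_eq_mul, mul_rpow hc.le (by positivity), ← rpow_mul hr.le,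
        show -α * a - 1 = (-α - 1) + -α * (a - 1) by ring, rpow_add hr]
      ring
    · have hmem : c * r ^ (-α) ∉ Ioi x₀ := fun h =>
        hrR ((rpow_lt_rpow_iff_of_neg hR hr (neg_neg_of_pos hα)).1
          (lt_of_mul_lt_mul_left h hc.le))
      rw [f_def, indicator_of_notMem hmem, indicator_of_notMem fun h => hrR h.2, smul_zero]
  have hx₀ : 0 < x₀ := by positivity
  calc uGamma a x₀ = ∫ t in Ioi 0, f t := by
        rw [setIntegral_indicator measurableSet_Ioi, Ioi_inter_Ioi, max_eq_right hx₀.le]; rfl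
    _ = c * ∫ u in Ioi 0, f (c * u) := by
        rw [integral_comp_mul_left_Ioi f 0 hc, mul_zero, smul_eq_mul, mul_inv_cancel_left₀ hc.ne']
    _ = c * ∫ r in Ioi 0, (|-α| * r ^ (-α - 1)) • f (c * r ^ (-α)) := by
        rw [integral_comp_rpow_Ioi (fun u => f (c * u)) (neg_ne_zero.2 hα.ne')]
    _ = α * c ^ a * ∫ r in Ioc 0 R, r ^ (-α * a - 1) * exp (-(c * r ^ (-α))) := by
        rw [setIntegral_congr_fun measurableSet_Ioi hf, setIntegral_indicator measurableSet_Ioo,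
          Ioi_inter_Ioo, max_self, integral_const_mul, ← integral_Ioc_eq_integral_Ioo,
          rpow_sub_one hc.ne']
        field_simp

noncomputable def threshold (T x : ℝ) : ℝ := x * if T ≤ x then 1 else 0

lemma threshold_nonneg {T : ℝ} (hT : 0 ≤ T) (x : ℝ) : 0 ≤ threshold T x := by
  unfold threshold
  split_ifs with h
  · rw [mul_one]; exact hT.trans h
  · rw [mul_zero]

lemma measurable_threshold (T : ℝ) : Measurable (threshold T) :=
  measurable_id.mul (Measurable.ite measurableSet_Ici measurable_const measurable_const)

section
variable {D α T G : ℝ}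

lemma setIntegral_threshold_eq (hα : 0 < α) (hT : 0 < T) (hG : 0 < G) {m : ℕ} (hm : m ≠ 0)
    (b : ℝ) :
    ∫ r in Ioc 0 D,
        r * (threshold T (G * r ^ (-α)) ^ m * exp (-1 / b * threshold T (G * r ^ (-α)))) =
      G ^ m * ∫ r in Ioc 0 (min D ((T / G) ^ (-α)⁻¹)),
        r ^ (-α * ((m : ℝ) - 2 / α) - 1) * exp (-(G / b * r ^ (-α))) := by
  set K := (T / G) ^ (-α)⁻¹
  have h : ∀ r ∈ Ioc 0 D, r * (threshold T (G * r ^ (-α)) ^ m *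
      exp (-1 / b * threshold T (G * r ^ (-α)))) = (Ioc 0 K).indicator (fun r =>
        G ^ m * (r ^ (-α * ((m : ℝ) - 2 / α) - 1) * exp (-(G / b * r ^ (-α))))) r := by
    rintro r ⟨hr, -⟩
    have hrK : r ≤ K ↔ T ≤ G * r ^ (-α) := by
      rw [le_rpow_inv_iff_of_neg hr (by positivity) (neg_neg_of_pos hα), div_le_iff₀' hG]
    by_cases hle : T ≤ G * r ^ (-α)
    · rw [indicator_of_mem (show r ∈ Ioc 0 K from ⟨hr, hrK.2 hle⟩), threshold, if_pos hle,
        mul_one, mul_pow, ← rpow_natCast (r ^ (-α)), ← rpow_mul hr.le,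
        show -α * ((m : ℝ) - 2 / α) - 1 = 1 + -α * m by field_simp; ring, rpow_add hr,
        rpow_one]
      ring_nf
    · rw [indicator_of_notMem (fun h => hle (hrK.1 h.2)), threshold, if_neg hle, mul_zero,
        zero_pow hm, zero_mul, mul_zero]
  rw [setIntegral_congr_fun measurableSet_Ioc h, setIntegral_indicator measurableSet_Ioc,
    Ioc_inter_Ioc, max_self, integral_const_mul, min_comm]

lemma setIntegral_threshold_pow_mul_exp (hD : 0 < D) (hα : 0 < α) (hT : 0 < T) (hG : 0 < G)
    {m : ℕ} (hm : m ≠ 0) {b : ℝ} (hb : 0 < b) :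
    ∫ r in Ioc 0 D,
        r * (threshold T (G * r ^ (-α)) ^ m * exp (-1 / b * threshold T (G * r ^ (-α)))) =
      α⁻¹ * b ^ ((m : ℝ) - 2 / α) *
        (G ^ (2 / α) * uGamma ((m : ℝ) - 2 / α) (G / b * max (D ^ (-α)) (T / G))) := by
  have hK : 0 < (T / G) ^ (-α)⁻¹ := by positivity
  have hmax : max (D ^ (-α)) (T / G) = min D ((T / G) ^ (-α)⁻¹) ^ (-α) := by
    rw [(antitoneOn_rpow_Ioi_of_exponent_nonpos (neg_nonpos.2 hα.le)).map_min hD hK,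
      rpow_inv_rpow (by positivity) (neg_ne_zero.2 hα.ne')]
  have hGm : G ^ m = G ^ (2 / α) * G ^ ((m : ℝ) - 2 / α) := by
    rw [← rpow_add hG, add_sub_cancel, rpow_natCast]
  rw [setIntegral_threshold_eq hα hT hG hm, hmax,
    uGamma_mul_rpow_neg hα (div_pos hG hb) (lt_min hD hK), hGm, div_rpow hG.le hb.le]
  generalize (∫ r in Ioc (0 : ℝ) _, (_ : ℝ)) = I
  field_simp
end

theorem stmt_10_general {Ω : Type*} [MeasurableSpace Ω] (μ : Measure Ω) [IsProbabilityMeasure μ]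
    (D α T lam b : ℝ) (hD : 0 < D) (hα : 2 < α) (hT : 0 < T) (hb : 0 < b)
    (m : ℕ) (hm : 1 ≤ m)
    (g : Ω → ℝ) (hgm : Measurable g)
    (hgpos : ∀ᵐ ω ∂μ, 0 < g ω) :
    ContDiffOn ℝ m
      (fun s : ℝ => 2 * Real.pi * lam * ∫ r in (0:ℝ)..D,
        r * ∫ ω, Real.exp (s * g ω * r ^ (-α) *
            (if T ≤ g ω * r ^ (-α) then (1:ℝ) else 0)) ∂μ)
      (Set.Iio 0) ∧
    iteratedDerivWithin m
      (fun s : ℝ => 2 * Real.pi * lam * ∫ r in (0:ℝ)..D,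
        r * ∫ ω, Real.exp (s * g ω * r ^ (-α) *
            (if T ≤ g ω * r ^ (-α) then (1:ℝ) else 0)) ∂μ)
      (Set.Iio 0) (-1 / b)
      = (2 / α) * lam * Real.pi * b ^ ((m : ℝ) - 2 / α) *
          ∫ ω, g ω ^ (2 / α) *
            uGamma ((m : ℝ) - 2 / α) ((g ω / b) * max (D ^ (-α)) (T / g ω)) ∂μ := by
  have hα₀ : 0 < α := by linarith
  set ν := (radialMeasure D).prod μ
  set X : ℝ × Ω → ℝ := fun p => threshold T (g p.2 * p.1 ^ (-α))
  have hX : Measurable X := (measurable_threshold T).comp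
    ((hgm.comp measurable_snd).mul (measurable_fst.pow_const _))
  have hIio : Iio 0 ⊆ interior (integrableExpSet X ν) :=
    Iio_subset_interior_integrableExpSet hX.aemeasurable
      (ae_of_all _ fun _ => threshold_nonneg hT.le _)
  have hEq : EqOn (fun s : ℝ => 2 * π * lam * ∫ r in (0:ℝ)..D,
        r * ∫ ω, exp (s * g ω * r ^ (-α) *
          (if T ≤ g ω * r ^ (-α) then (1:ℝ) else 0)) ∂μ)
      (fun s => 2 * π * lam * mgf X ν s) (Iio 0) := by
    intro s hs
    dsimp only
    rw [← intervalIntegral_mul_integral_exp_eq_mgf hD.le (interior_subset (hIio hs))]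
    simp only [X, threshold, mul_assoc]
  have hs₀ : -1 / b ∈ Iio 0 := div_neg_of_neg_of_pos (by norm_num) hb
  refine ⟨(contDiffOn_const.mul ((analyticOnNhd_mgf.mono hIio).contDiffOn
    isOpen_Iio.uniqueDiffOn)).congr hEq, ?_⟩
  rw [iteratedDerivWithin_congr hEq hs₀, iteratedDerivWithin_const_mul_field,
    iteratedDerivWithin_of_isOpen isOpen_Iio hs₀,
    iteratedDeriv_mgf_radialMeasure_prod (hIio hs₀),
    integral_congr_ae (hgpos.mono fun ω hω => setIntegral_threshold_pow_mul_exp hD hα₀ hT hω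
      (by omega) hb), integral_const_mul]
  ring

theorem stmt_10 {Ω : Type*} [MeasurableSpace Ω] (μ : Measure Ω) [IsProbabilityMeasure μ]
    (D α T lam b : ℝ) (hD : 0 < D) (hα : 2 < α) (hT : 0 < T) (hlam : 0 < lam) (hb : 0 < b)
    (m : ℕ) (hm : 1 ≤ m)
    (g : Ω → ℝ) (hgm : Measurable g) (hgnn : ∀ ω, 0 ≤ g ω)
    (hgpos : ∀ᵐ ω ∂μ, 0 < g ω) (hgint : Integrable g μ) :
    ContDiffOn ℝ m
      (fun s : ℝ => 2 * Real.pi * lam * ∫ r in (0:ℝ)..D,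
        r * ∫ ω, Real.exp (s * g ω * r ^ (-α) *
            (if T ≤ g ω * r ^ (-α) then (1:ℝ) else 0)) ∂μ)
      (Set.Iio 0) ∧
    iteratedDerivWithin m
      (fun s : ℝ => 2 * Real.pi * lam * ∫ r in (0:ℝ)..D,
        r * ∫ ω, Real.exp (s * g ω * r ^ (-α) *
            (if T ≤ g ω * r ^ (-α) then (1:ℝ) else 0)) ∂μ)
      (Set.Iio 0) (-1 / b)
      = (2 / α) * lam * Real.pi * b ^ ((m : ℝ) - 2 / α) *
          ∫ ω, g ω ^ (2 / α) *
            uGamma ((m : ℝ) - 2 / α) ((g ω / b) * max (D ^ (-α)) (T / g ω)) ∂μ :=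
  stmt_10_general μ D α T lam b hD hα hT hb m hm g hgm hgpos
end
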